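/- Let (X,G) be a Cantor dynamical system such that for every nonempty clopen set A there is a point x ∈ A whose G-orbit intersects A in at least two points. Then the full group [G] has many involutions: for every nonempty regular open set A there is an involution π ∈ [G] with π ≠ id and spr(π) ⊆ A. -/

import Mathlib

open Set

variable {X : Type*} [TopologicalSpace X]

noncomputable instance Homeomorph.instGroup_1 : Group (X ≃ₜ X) where
  mul f g := g.trans f
  one := Homeomorph.refl X
  inv := Homeomorph.symm
  mul_assoc _ _ _ := Homeomorph.ext fun _ => rfl
  one_mul _ := Homeomorph.ext fun _ => rfl
  mul_one _ := Homeomorph.ext fun _ => rfl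
  inv_mul_cancel f := Homeomorph.ext fun x => f.symm_apply_apply x

@[simp] theorem Homeomorph.mul_apply' (f g : X ≃ₜ X) (x : X) : (f * g) x = f (g x) := rfl
@[simp] theorem Homeomorph.one_apply' (x : X) : (1 : X ≃ₜ X) x = x := rfl

/-- The support of a homeomorphism. -/
def spr (γ : X ≃ₜ X) : Set X := interior (closure {x | γ x ≠ x})

/-- The orbit of a point under a subgroup of homeomorphisms. -/
def orbitOf (G : Subgroup (X ≃ₜ X)) (x : X) : Set X := {y | ∃ g ∈ G, (g : X ≃ₜ X) x = y}

/-- The full group of a Cantor dynamical system. -/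
def fullGroup (G : Subgroup (X ≃ₜ X)) : Subgroup (X ≃ₜ X) where
  carrier := {γ | ∀ x, γ x ∈ orbitOf G x}
  one_mem' x := ⟨1, G.one_mem, rfl⟩
  mul_mem' {a b} ha hb x := by
    obtain ⟨h, hh, hbx⟩ := hb x
    obtain ⟨g, hg, hax⟩ := ha (b x)
    exact ⟨g * h, G.mul_mem hg hh, by simp only [Homeomorph.mul_apply'] at *; rw [hbx, hax]⟩
  inv_mem' {a} ha := by
    intro x
    obtain ⟨g, hg, hax⟩ := ha (a⁻¹ x)
    refine ⟨g⁻¹, G.inv_mem hg, ?_⟩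
    have : a (a⁻¹ x) = x := a.apply_symm_apply x
    rw [this] at hax
    have : (g⁻¹ : X ≃ₜ X) (g (a⁻¹ x)) = a⁻¹ x := g.symm_apply_apply _
    rw [hax] at this
    exact this

/-!
Shrink `A` to a nonempty clopen set `U`, pick `x ∈ U` and `g ∈ G` with `x ≠ g x ∈ U`, and shrink
further to a clopen `V ∋ x` with `V` and `g V` disjoint and contained in `U`. The homeomorphism
that is `g` on `V`, `g⁻¹` on `g V` and the identity elsewhere is then a nontrivial involution in
`[G]` supported in the clopen set `V ∪ g V ⊆ U ⊆ A`.
-/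

namespace Homeomorph

open Classical in
noncomputable def swapAlongFun (g : X ≃ₜ X) (V : Set X) : X → X :=
  V.piecewise g ((g '' V).piecewise g.symm id)

variable {g : X ≃ₜ X} {V : Set X}

theorem swapAlongFun_of_mem {y : X} (hy : y ∈ V) : swapAlongFun g V y = g y := by
  simp [swapAlongFun, hy]

theorem swapAlongFun_of_mem_image {y : X} (hy : y ∉ V) (hy' : y ∈ g '' V) :
    swapAlongFun g V y = g.symm y := by
  simp [swapAlongFun, hy, hy']

theorem swapAlongFun_of_notMem {y : X} (hy : y ∉ V) (hy' : y ∉ g '' V) :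
    swapAlongFun g V y = y := by
  simp [swapAlongFun, hy, hy']

theorem swapAlongFun_involutive (hd : Disjoint V (g '' V)) : (swapAlongFun g V).Involutive := by
  intro y
  by_cases hy : y ∈ V
  · have hgy : g y ∈ g '' V := mem_image_of_mem g hy
    rw [swapAlongFun_of_mem hy, swapAlongFun_of_mem_image (hd.notMem_of_mem_right hgy) hgy,
      symm_apply_apply]
  by_cases hy' : y ∈ g '' V
  · have hgy : g.symm y ∈ V := by rwa [image_eq_preimage_symm] at hy'
    rw [swapAlongFun_of_mem_image hy hy', swapAlongFun_of_mem hgy, apply_symm_apply]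
  · rw [swapAlongFun_of_notMem hy hy', swapAlongFun_of_notMem hy hy']

open Classical in
theorem continuous_swapAlongFun (hV : IsClopen V) : Continuous (swapAlongFun g V) := by
  have hgV : IsClopen (g '' V) := by
    rw [image_eq_preimage_symm]; exact hV.preimage g.symm.continuous
  refine g.continuous.piecewise (by simp [hV.frontier_eq]) ?_
  exact g.symm.continuous.piecewise (by simp [hgV.frontier_eq]) continuous_id

noncomputable def swapAlong (g : X ≃ₜ X) (V : Set X) (hV : IsClopen V)
    (hd : Disjoint V (g '' V)) : X ≃ₜ X where
  toEquiv := (swapAlongFun_involutive hd).toPerm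
  continuous_toFun := continuous_swapAlongFun hV
  continuous_invFun := continuous_swapAlongFun hV

variable (hV : IsClopen V) (hd : Disjoint V (g '' V))

theorem swapAlong_apply (y : X) : swapAlong g V hV hd y = swapAlongFun g V y := rfl

theorem swapAlong_mul_self : swapAlong g V hV hd * swapAlong g V hV hd = 1 :=
  Homeomorph.ext (swapAlongFun_involutive hd)

theorem swapAlong_ne_one (hV₀ : V.Nonempty) : swapAlong g V hV hd ≠ 1 := by
  obtain ⟨x, hx⟩ := hV₀
  intro h
  have hgx : g x = x := by
    simpa [swapAlong_apply, swapAlongFun_of_mem hx] using DFunLike.congr_fun h x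
  exact hd.notMem_of_mem_left hx (hgx ▸ mem_image_of_mem g hx)

theorem swapAlong_mem_fullGroup {G : Subgroup (X ≃ₜ X)} (hg : g ∈ G) :
    swapAlong g V hV hd ∈ fullGroup G := by
  intro y
  rw [swapAlong_apply]
  by_cases hy : y ∈ V
  · exact ⟨g, hg, (swapAlongFun_of_mem hy).symm⟩
  by_cases hy' : y ∈ g '' V
  · exact ⟨g⁻¹, G.inv_mem hg, (swapAlongFun_of_mem_image hy hy').symm⟩
  · exact ⟨1, G.one_mem, (swapAlongFun_of_notMem hy hy').symm⟩

theorem setOf_swapAlong_ne_subset : {y | swapAlong g V hV hd y ≠ y} ⊆ V ∪ g '' V := by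
  intro y hy
  by_contra hy'
  simp only [mem_union, not_or] at hy'
  exact hy (swapAlongFun_of_notMem hy'.1 hy'.2)

end Homeomorph

theorem spr_subset_of_setOf_ne_subset {γ : X ≃ₜ X} {C : Set X} (hC : IsClosed C)
    (hγ : {x | γ x ≠ x} ⊆ C) : spr γ ⊆ C :=
  interior_subset.trans (closure_minimal hγ hC)

theorem exists_isClopen_disjoint_image [CompactSpace X] [T2Space X] [TotallyDisconnectedSpace X]
    {f : X → X} (hf : Continuous f) {U : Set X} (hU : IsOpen U) {x : X} (hx : x ∈ U)
    (hfx : f x ∈ U) (hfxx : f x ≠ x) :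
    ∃ V, IsClopen V ∧ x ∈ V ∧ V ⊆ U ∧ f '' V ⊆ U ∧ Disjoint V (f '' V) := by
  obtain ⟨O₁, O₂, hO₁, hO₂, hxO₁, hfxO₂, hO⟩ := t2_separation hfxx.symm
  obtain ⟨V, hV, hxV, hVW⟩ := compact_exists_isClopen_in_isOpen
    ((hU.inter hO₁).inter ((hU.inter hO₂).preimage hf)) ⟨⟨hx, hxO₁⟩, hfx, hfxO₂⟩
  refine ⟨V, hV, hxV, fun y hy => (hVW hy).1.1, ?_, ?_⟩
  · rintro _ ⟨y, hy, rfl⟩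
    exact (hVW hy).2.1
  · refine disjoint_of_subset (fun y hy => (hVW hy).1.2) ?_ hO
    rintro _ ⟨y, hy, rfl⟩
    exact (hVW hy).2.2

theorem fullGroup_many_involutions_general {X : Type*} [TopologicalSpace X] [CompactSpace X] [TopologicalSpace.MetrizableSpace X] [TotallyDisconnectedSpace X]
    (G : Subgroup (X ≃ₜ X))
    (h : ∀ A : Set X, IsClopen A → A.Nonempty →
      ∃ x ∈ A, ∃ g ∈ G, (g : X ≃ₜ X) x ∈ A ∧ (g : X ≃ₜ X) x ≠ x) :
    ∀ A : Set X, A = interior (closure A) → A.Nonempty →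
      ∃ π ∈ fullGroup G, π * π = 1 ∧ π ≠ 1 ∧ spr π ⊆ A := by
  intro A hA ⟨a, ha⟩
  have hAopen : IsOpen A := hA ▸ isOpen_interior
  obtain ⟨U, hU, haU, hUA⟩ := compact_exists_isClopen_in_isOpen hAopen ha
  obtain ⟨x, hxU, g, hg, hgxU, hgx⟩ := h U hU ⟨a, haU⟩
  obtain ⟨V, hV, hxV, hVU, hgVU, hd⟩ :=
    exists_isClopen_disjoint_image g.continuous hU.isOpen hxU hgxU hgx
  refine ⟨Homeomorph.swapAlong g V hV hd, Homeomorph.swapAlong_mem_fullGroup hV hd hg,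
    Homeomorph.swapAlong_mul_self hV hd, Homeomorph.swapAlong_ne_one hV hd ⟨x, hxV⟩, ?_⟩
  refine (spr_subset_of_setOf_ne_subset hU.isClosed ?_).trans hUA
  exact (Homeomorph.setOf_swapAlong_ne_subset hV hd).trans (union_subset hVU hgVU)

/-- If every nonempty clopen set contains a point whose orbit meets it twice, the full group
has many involutions. -/
theorem fullGroup_many_involutions {X : Type*} [TopologicalSpace X] [CompactSpace X] [TopologicalSpace.MetrizableSpace X] [TotallyDisconnectedSpace X] [PerfectSpace X] [Nonempty X]
    (G : Subgroup (X ≃ₜ X))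
    (h : ∀ A : Set X, IsClopen A → A.Nonempty →
      ∃ x ∈ A, ∃ g ∈ G, (g : X ≃ₜ X) x ∈ A ∧ (g : X ≃ₜ X) x ≠ x) :
    ∀ A : Set X, A = interior (closure A) → A.Nonempty →
      ∃ π ∈ fullGroup G, π * π = 1 ∧ π ≠ 1 ∧ spr π ⊆ A :=
  fullGroup_many_involutions_general G h
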